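/- arXiv:2603.24555 — 3 statements merged into one kernel-verified Lean document; each statement's English description precedes it below -/
import Mathlib

section
/- Let X₁, X₂, X₃, X₄ be N×N complex matrices and M = max_i ‖X_i‖ with M < 1. Then there is a constant C depending only on N such that | ‖I − exp(X₁)exp(X₂)exp(X₃)exp(X₄)‖² − ‖X₁ + X₂ + X₃ + X₄‖² | ≤ C M³. -/
attribute [local instance] Matrix.frobeniusNormedAddCommGroup Matrix.frobeniusNormedSpace
  Matrix.frobeniusNormedRing Matrix.frobeniusNormedAlgebra

open NormedSpace

section Aux

lemma two_pow_le_fac' (n : ℕ) : 2 ^ (n + 1) ≤ Nat.factorial (n + 2) := by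
  induction n with
  | zero => norm_num [Nat.factorial]
  | succ k ih =>
      rw [pow_succ]
      calc 2 ^ (k + 1) * 2 ≤ Nat.factorial (k + 2) * (k + 3) :=
            Nat.mul_le_mul ih (by omega)
        _ = Nat.factorial (k + 3) := by
            rw [Nat.factorial_succ (k + 2), Nat.mul_comm]

lemma exp_taylor2' {𝔸 : Type*} [NormedRing 𝔸] [NormedAlgebra ℂ 𝔸] [CompleteSpace 𝔸]
    (X : 𝔸) (h1 : ‖X‖ ≤ 1) : ‖exp X - 1 - X‖ ≤ ‖X‖ ^ 2 := by
  have hs := NormedSpace.exp_series_hasSum_exp' (𝕂 := ℂ) X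
  have htail : HasSum (fun n : ℕ => ((Nat.factorial (n + 2) : ℂ))⁻¹ • X ^ (n + 2))
      (exp X - ∑ i ∈ Finset.range 2, ((Nat.factorial i : ℂ))⁻¹ • X ^ i) :=
    (hasSum_nat_add_iff' 2).mpr hs
  have hsum2 : (∑ i ∈ Finset.range 2, ((Nat.factorial i : ℂ))⁻¹ • X ^ i) = 1 + X := by
    simp [Finset.sum_range_succ]
  rw [hsum2] at htail
  have heq : exp X - 1 - X = ∑' n : ℕ, ((Nat.factorial (n + 2) : ℂ))⁻¹ • X ^ (n + 2) := by
    rw [htail.tsum_eq, sub_sub]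
  have hbound : ∀ n : ℕ, ‖((Nat.factorial (n + 2) : ℂ))⁻¹ • X ^ (n + 2)‖
      ≤ (‖X‖ ^ 2 * 2⁻¹) * 2⁻¹ ^ n := by
    intro n
    have hfacpos : (0:ℝ) < (Nat.factorial (n + 2) : ℝ) := by positivity
    have h1' : ‖((Nat.factorial (n + 2) : ℂ))⁻¹ • X ^ (n + 2)‖
        ≤ ((Nat.factorial (n + 2) : ℝ))⁻¹ * ‖X‖ ^ (n + 2) := by
      rw [norm_smul, norm_inv, Complex.norm_natCast]
      exact mul_le_mul_of_nonneg_left (norm_pow_le' X (by omega)) (by positivity)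
    refine h1'.trans ?_
    have hfac : ((2 : ℝ) ^ (n + 1)) ≤ ((Nat.factorial (n + 2)) : ℝ) := by
      exact_mod_cast two_pow_le_fac' n
    have hinv : ((Nat.factorial (n + 2) : ℝ))⁻¹ ≤ ((2:ℝ) ^ (n + 1))⁻¹ :=
      inv_anti₀ (by positivity) hfac
    have hXp : ‖X‖ ^ (n + 2) ≤ ‖X‖ ^ 2 := by
      calc ‖X‖ ^ (n + 2) = ‖X‖ ^ 2 * ‖X‖ ^ n := by ring
      _ ≤ ‖X‖ ^ 2 * 1 :=
          mul_le_mul_of_nonneg_left (pow_le_one₀ (norm_nonneg _) h1) (by positivity)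
      _ = ‖X‖ ^ 2 := by ring
    calc ((Nat.factorial (n + 2) : ℝ))⁻¹ * ‖X‖ ^ (n + 2)
        ≤ ((2:ℝ) ^ (n + 1))⁻¹ * ‖X‖ ^ 2 :=
          mul_le_mul hinv hXp (pow_nonneg (norm_nonneg X) _)
            (inv_nonneg.mpr (pow_nonneg (by norm_num) _))
      _ = (‖X‖ ^ 2 * 2⁻¹) * 2⁻¹ ^ n := by
          rw [pow_succ, mul_inv, ← inv_pow]
          ring
  have hg : Summable (fun n : ℕ => (‖X‖ ^ 2 * 2⁻¹) * 2⁻¹ ^ n) :=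
    (summable_geometric_of_lt_one (by norm_num) (by norm_num)).mul_left _
  have hnorm_sum : Summable (fun n : ℕ => ‖((Nat.factorial (n + 2) : ℂ))⁻¹ • X ^ (n + 2)‖) :=
    Summable.of_nonneg_of_le (fun n => norm_nonneg _) hbound hg
  calc ‖exp X - 1 - X‖ = ‖∑' n : ℕ, ((Nat.factorial (n + 2) : ℂ))⁻¹ • X ^ (n + 2)‖ := by
        rw [heq]
    _ ≤ ∑' n : ℕ, ‖((Nat.factorial (n + 2) : ℂ))⁻¹ • X ^ (n + 2)‖ :=
        norm_tsum_le_tsum_norm hnorm_sum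
    _ ≤ ∑' n : ℕ, (‖X‖ ^ 2 * 2⁻¹) * 2⁻¹ ^ n :=
        Summable.tsum_le_tsum hbound hnorm_sum hg
    _ = (‖X‖ ^ 2 * 2⁻¹) * (1 - 2⁻¹)⁻¹ := by
        rw [tsum_mul_left, tsum_geometric_of_lt_one (by norm_num) (by norm_num)]
    _ = ‖X‖ ^ 2 := by ring_nf

lemma norm_add4_le {E : Type*} [SeminormedAddGroup E] (a b c d : E) :
    ‖a + b + c + d‖ ≤ ‖a‖ + ‖b‖ + ‖c‖ + ‖d‖ := by
  calc ‖a + b + c + d‖ ≤ ‖a + b + c‖ + ‖d‖ := norm_add_le _ _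
    _ ≤ (‖a‖ + ‖b‖ + ‖c‖) + ‖d‖ := by gcongr; exact norm_add₃_le
    _ = _ := by ring

lemma norm_add6_le {E : Type*} [SeminormedAddGroup E] (a b c d e f : E) :
    ‖a + b + c + d + e + f‖ ≤ ‖a‖ + ‖b‖ + ‖c‖ + ‖d‖ + ‖e‖ + ‖f‖ := by
  calc ‖a + b + c + d + e + f‖ ≤ ‖a + b + c + d + e‖ + ‖f‖ := norm_add_le _ _
    _ ≤ (‖a + b + c + d‖ + ‖e‖) + ‖f‖ := by gcongr; exact norm_add_le _ _
    _ ≤ ((‖a‖ + ‖b‖ + ‖c‖ + ‖d‖) + ‖e‖) + ‖f‖ := by gcongr; exact norm_add4_le _ _ _ _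
    _ = _ := by ring

end Aux

set_option maxHeartbeats 1000000 in
/-- For `N × N` complex matrices `X₁, …, X₄` with `M = max_i ‖X_i‖ < 1`
(Hilbert–Schmidt norm), there is a constant `C` depending only on `N` with
`|‖I - e^{X₁}e^{X₂}e^{X₃}e^{X₄}‖² - ‖X₁+X₂+X₃+X₄‖²| ≤ C M³`. -/
theorem stmt2 (N : ℕ) :
    ∃ C : ℝ, 0 < C ∧
      ∀ X₁ X₂ X₃ X₄ : Matrix (Fin N) (Fin N) ℂ,
        ∀ M : ℝ, M = max (max ‖X₁‖ ‖X₂‖) (max ‖X₃‖ ‖X₄‖) → M < 1 →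
          |‖(1 : Matrix (Fin N) (Fin N) ℂ) -
                NormedSpace.exp X₁ * NormedSpace.exp X₂ *
                  NormedSpace.exp X₃ * NormedSpace.exp X₄‖ ^ 2 -
              ‖X₁ + X₂ + X₃ + X₄‖ ^ 2| ≤ C * M ^ 3 := by
  refine ⟨10800, by norm_num, ?_⟩
  intro X₁ X₂ X₃ X₄ M hM hM1
  set E₁ := NormedSpace.exp X₁ with hE₁
  set E₂ := NormedSpace.exp X₂ with hE₂
  set E₃ := NormedSpace.exp X₃ with hE₃
  set E₄ := NormedSpace.exp X₄ with hE₄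
  have h0 : 0 ≤ M := hM ▸ le_trans (norm_nonneg X₁) (le_max_of_le_left (le_max_left _ _))
  have hx1 : ‖X₁‖ ≤ M := hM ▸ le_max_of_le_left (le_max_left _ _)
  have hx2 : ‖X₂‖ ≤ M := hM ▸ le_max_of_le_left (le_max_right _ _)
  have hx3 : ‖X₃‖ ≤ M := hM ▸ le_max_of_le_right (le_max_left _ _)
  have hx4 : ‖X₄‖ ≤ M := hM ▸ le_max_of_le_right (le_max_right _ _)
  have hB : ∀ X : Matrix (Fin N) (Fin N) ℂ, ‖X‖ ≤ M →
      ‖NormedSpace.exp X - 1 - X‖ ≤ M ^ 2 := by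
    intro X hX
    refine (exp_taylor2' X (hX.trans hM1.le)).trans ?_
    exact pow_le_pow_left₀ (norm_nonneg _) hX 2
  have hB1 := hB X₁ hx1; have hB2 := hB X₂ hx2
  have hB3 := hB X₃ hx3; have hB4 := hB X₄ hx4
  have hY : ∀ X : Matrix (Fin N) (Fin N) ℂ, ‖X‖ ≤ M →
      ‖NormedSpace.exp X - 1‖ ≤ 2 * M := by
    intro X hX
    have : NormedSpace.exp X - 1 = (NormedSpace.exp X - 1 - X) + X := by abel
    rw [this]
    refine (norm_add_le _ _).trans ?_
    have := hB X hX
    nlinarith [norm_nonneg X]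
  have hY1 := hY X₁ hx1; have hY2 := hY X₂ hx2
  have hY3 := hY X₃ hx3; have hY4 := hY X₄ hx4
  set S := X₁ + X₂ + X₃ + X₄ with hS
  set R := E₁ * E₂ * E₃ * E₄ - 1 - S with hR
  have key : R =
      ((E₁ - 1 - X₁) + (E₂ - 1 - X₂) + (E₃ - 1 - X₃) + (E₄ - 1 - X₄))
      + ((E₁ - 1) * (E₂ - 1) + (E₁ - 1) * (E₃ - 1) + (E₁ - 1) * (E₄ - 1)
        + (E₂ - 1) * (E₃ - 1) + (E₂ - 1) * (E₄ - 1) + (E₃ - 1) * (E₄ - 1))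
      + ((E₁ - 1) * (E₂ - 1) * (E₃ - 1) + (E₁ - 1) * (E₂ - 1) * (E₄ - 1)
        + (E₁ - 1) * (E₃ - 1) * (E₄ - 1) + (E₂ - 1) * (E₃ - 1) * (E₄ - 1))
      + (E₁ - 1) * (E₂ - 1) * (E₃ - 1) * (E₄ - 1) := by
    rw [hR, hS]; noncomm_ring
  have hM2 : M ^ 2 ≤ M := by nlinarith
  have h2M : 2 * M ≤ 2 := by nlinarith
  have hpair : ∀ A B : Matrix (Fin N) (Fin N) ℂ, ‖A‖ ≤ 2 * M → ‖B‖ ≤ 2 * M →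
      ‖A * B‖ ≤ 4 * M ^ 2 := by
    intro A B hA hB'
    calc ‖A * B‖ ≤ ‖A‖ * ‖B‖ := norm_mul_le _ _
      _ ≤ (2 * M) * (2 * M) := mul_le_mul hA hB' (norm_nonneg _) (by linarith)
      _ = 4 * M ^ 2 := by ring
  have htrip : ∀ A B C : Matrix (Fin N) (Fin N) ℂ,
      ‖A‖ ≤ 2 * M → ‖B‖ ≤ 2 * M → ‖C‖ ≤ 2 * M → ‖A * B * C‖ ≤ 8 * M ^ 2 := by
    intro A B C hA hB' hC
    calc ‖A * B * C‖ ≤ ‖A * B‖ * ‖C‖ := norm_mul_le _ _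
      _ ≤ (4 * M ^ 2) * 2 := mul_le_mul (hpair A B hA hB') (hC.trans h2M)
          (norm_nonneg _) (by positivity)
      _ = 8 * M ^ 2 := by ring
  have hquad : ‖(E₁ - 1) * (E₂ - 1) * (E₃ - 1) * (E₄ - 1)‖ ≤ 16 * M ^ 2 := by
    calc ‖(E₁ - 1) * (E₂ - 1) * (E₃ - 1) * (E₄ - 1)‖
        ≤ ‖(E₁ - 1) * (E₂ - 1) * (E₃ - 1)‖ * ‖E₄ - 1‖ := norm_mul_le _ _
      _ ≤ (8 * M ^ 2) * 2 := mul_le_mul (htrip _ _ _ hY1 hY2 hY3) (hY4.trans h2M)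
          (norm_nonneg _) (by positivity)
      _ = 16 * M ^ 2 := by ring
  have hRnorm : ‖R‖ ≤ 76 * M ^ 2 := by
    rw [key]
    have t1 : ‖(E₁ - 1 - X₁) + (E₂ - 1 - X₂) + (E₃ - 1 - X₃) + (E₄ - 1 - X₄)‖ ≤ 4 * M ^ 2 := by
      calc _ ≤ ‖(E₁ - 1 - X₁) + (E₂ - 1 - X₂) + (E₃ - 1 - X₃)‖ + ‖E₄ - 1 - X₄‖ :=
            norm_add_le _ _
        _ ≤ (‖(E₁ - 1 - X₁) + (E₂ - 1 - X₂)‖ + ‖E₃ - 1 - X₃‖) + ‖E₄ - 1 - X₄‖ := by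
            gcongr; exact norm_add_le _ _
        _ ≤ ((‖E₁ - 1 - X₁‖ + ‖E₂ - 1 - X₂‖) + ‖E₃ - 1 - X₃‖) + ‖E₄ - 1 - X₄‖ := by
            gcongr; exact norm_add_le _ _
        _ ≤ 4 * M ^ 2 := by linarith
    have t2 : ‖(E₁ - 1) * (E₂ - 1) + (E₁ - 1) * (E₃ - 1) + (E₁ - 1) * (E₄ - 1)
        + (E₂ - 1) * (E₃ - 1) + (E₂ - 1) * (E₄ - 1) + (E₃ - 1) * (E₄ - 1)‖ ≤ 24 * M ^ 2 := by
      have p12 := hpair _ _ hY1 hY2; have p13 := hpair _ _ hY1 hY3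
      have p14 := hpair _ _ hY1 hY4; have p23 := hpair _ _ hY2 hY3
      have p24 := hpair _ _ hY2 hY4; have p34 := hpair _ _ hY3 hY4
      have := norm_add6_le ((E₁ - 1) * (E₂ - 1)) ((E₁ - 1) * (E₃ - 1)) ((E₁ - 1) * (E₄ - 1))
        ((E₂ - 1) * (E₃ - 1)) ((E₂ - 1) * (E₄ - 1)) ((E₃ - 1) * (E₄ - 1))
      linarith
    have t3 : ‖(E₁ - 1) * (E₂ - 1) * (E₃ - 1) + (E₁ - 1) * (E₂ - 1) * (E₄ - 1)
        + (E₁ - 1) * (E₃ - 1) * (E₄ - 1) + (E₂ - 1) * (E₃ - 1) * (E₄ - 1)‖ ≤ 32 * M ^ 2 := by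
      have q1 := htrip _ _ _ hY1 hY2 hY3; have q2 := htrip _ _ _ hY1 hY2 hY4
      have q3 := htrip _ _ _ hY1 hY3 hY4; have q4 := htrip _ _ _ hY2 hY3 hY4
      have := norm_add4_le ((E₁ - 1) * (E₂ - 1) * (E₃ - 1)) ((E₁ - 1) * (E₂ - 1) * (E₄ - 1))
        ((E₁ - 1) * (E₃ - 1) * (E₄ - 1)) ((E₂ - 1) * (E₃ - 1) * (E₄ - 1))
      linarith
    calc _ ≤ ‖((E₁ - 1 - X₁) + (E₂ - 1 - X₂) + (E₃ - 1 - X₃) + (E₄ - 1 - X₄))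
          + ((E₁ - 1) * (E₂ - 1) + (E₁ - 1) * (E₃ - 1) + (E₁ - 1) * (E₄ - 1)
            + (E₂ - 1) * (E₃ - 1) + (E₂ - 1) * (E₄ - 1) + (E₃ - 1) * (E₄ - 1))
          + ((E₁ - 1) * (E₂ - 1) * (E₃ - 1) + (E₁ - 1) * (E₂ - 1) * (E₄ - 1)
            + (E₁ - 1) * (E₃ - 1) * (E₄ - 1) + (E₂ - 1) * (E₃ - 1) * (E₄ - 1))‖
          + ‖(E₁ - 1) * (E₂ - 1) * (E₃ - 1) * (E₄ - 1)‖ := norm_add_le _ _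
      _ ≤ (‖((E₁ - 1 - X₁) + (E₂ - 1 - X₂) + (E₃ - 1 - X₃) + (E₄ - 1 - X₄))
          + ((E₁ - 1) * (E₂ - 1) + (E₁ - 1) * (E₃ - 1) + (E₁ - 1) * (E₄ - 1)
            + (E₂ - 1) * (E₃ - 1) + (E₂ - 1) * (E₄ - 1) + (E₃ - 1) * (E₄ - 1))‖
          + ‖(E₁ - 1) * (E₂ - 1) * (E₃ - 1) + (E₁ - 1) * (E₂ - 1) * (E₄ - 1)
            + (E₁ - 1) * (E₃ - 1) * (E₄ - 1) + (E₂ - 1) * (E₃ - 1) * (E₄ - 1)‖)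
          + ‖(E₁ - 1) * (E₂ - 1) * (E₃ - 1) * (E₄ - 1)‖ := by
            gcongr; exact norm_add_le _ _
      _ ≤ ((‖(E₁ - 1 - X₁) + (E₂ - 1 - X₂) + (E₃ - 1 - X₃) + (E₄ - 1 - X₄)‖
          + ‖(E₁ - 1) * (E₂ - 1) + (E₁ - 1) * (E₃ - 1) + (E₁ - 1) * (E₄ - 1)
            + (E₂ - 1) * (E₃ - 1) + (E₂ - 1) * (E₄ - 1) + (E₃ - 1) * (E₄ - 1)‖)
          + ‖(E₁ - 1) * (E₂ - 1) * (E₃ - 1) + (E₁ - 1) * (E₂ - 1) * (E₄ - 1)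
            + (E₁ - 1) * (E₃ - 1) * (E₄ - 1) + (E₂ - 1) * (E₃ - 1) * (E₄ - 1)‖)
          + ‖(E₁ - 1) * (E₂ - 1) * (E₃ - 1) * (E₄ - 1)‖ := by
            gcongr; exact norm_add_le _ _
      _ ≤ 76 * M ^ 2 := by linarith
  -- now conclude
  have hSnorm : ‖S‖ ≤ 4 * M := by
    rw [hS]
    calc ‖X₁ + X₂ + X₃ + X₄‖ ≤ ‖X₁‖ + ‖X₂‖ + ‖X₃‖ + ‖X₄‖ :=
        norm_add4_le _ _ _ _
      _ ≤ 4 * M := by linarith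
  have hone : (1 : Matrix (Fin N) (Fin N) ℂ) - E₁ * E₂ * E₃ * E₄ = -(S + R) := by
    rw [hR]; abel
  have habs : |‖(1 : Matrix (Fin N) (Fin N) ℂ) - E₁ * E₂ * E₃ * E₄‖ - ‖S‖| ≤ ‖R‖ := by
    rw [hone, norm_neg]
    have := abs_norm_sub_norm_le (S + R) S
    simpa using this
  have hle : ‖(1 : Matrix (Fin N) (Fin N) ℂ) - E₁ * E₂ * E₃ * E₄‖ ≤ ‖S‖ + ‖R‖ := by
    rw [hone, norm_neg]; exact norm_add_le _ _
  set a := ‖(1 : Matrix (Fin N) (Fin N) ℂ) - E₁ * E₂ * E₃ * E₄‖ with ha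
  set b := ‖S‖ with hb
  have hA0 : 0 ≤ a := norm_nonneg _
  have hB0 : 0 ≤ b := norm_nonneg _
  have hfact : |a ^ 2 - b ^ 2| = |a - b| * (a + b) := by
    rw [show a ^ 2 - b ^ 2 = (a - b) * (a + b) by ring, abs_mul,
      abs_of_nonneg (by linarith : (0:ℝ) ≤ a + b)]
  have hR0 : 0 ≤ ‖R‖ := norm_nonneg _
  calc |a ^ 2 - b ^ 2| = |a - b| * (a + b) := hfact
    _ ≤ ‖R‖ * (8 * M + 76 * M ^ 2) := by
        apply mul_le_mul habs _ (by linarith) hR0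
        linarith
    _ ≤ (76 * M ^ 2) * (84 * M) := by
        apply mul_le_mul hRnorm _ (by nlinarith) (by positivity)
        nlinarith
    _ = 6384 * M ^ 3 := by ring
    _ ≤ 10800 * M ^ 3 := by nlinarith [pow_nonneg h0 3]
end

section
/- Let R be a symmetric positive-definite real matrix indexed by a finite set E, whose spectrum is contained in [m, m + C] for some m > 0 and C > 0, and such that R(e,e') = 0 whenever dist(e,e') > r₀ for some fixed r₀ ≥ 1 (with respect to a metric dist on E). Then there exist constants C', c > 0 depending only on m, C, r₀ such that |R^{-1}(e,e')| ≤ C' e^{−c · dist(e,e')} for all e, e' ∈ E. -/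
open scoped Matrix

set_option maxHeartbeats 1000000 in
/-- Let `R` be a symmetric positive-definite real matrix indexed by a finite metric
space `E`, with spectrum contained in `[m, m + C]`, whose entries vanish at distance
greater than `r₀`. Then the entries of `R⁻¹` decay exponentially in the distance, with
constants depending only on `m`, `C`, `r₀`. -/
theorem stmt8 (m C r₀ : ℝ) (hm : 0 < m) (hC : 0 < C) (hr₀ : 1 ≤ r₀) :
    ∃ C' c : ℝ, 0 < C' ∧ 0 < c ∧
      ∀ (E : Type) [Fintype E] [DecidableEq E] [MetricSpace E] (R : Matrix E E ℝ),
        R.IsSymm →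
        (∀ x : E → ℝ, m * ∑ e, x e ^ 2 ≤ x ⬝ᵥ R.mulVec x) →
        (∀ x : E → ℝ, x ⬝ᵥ R.mulVec x ≤ (m + C) * ∑ e, x e ^ 2) →
        (∀ e e' : E, r₀ < dist e e' → R e e' = 0) →
        ∀ e e' : E, |R⁻¹ e e'| ≤ C' * Real.exp (-c * dist e e') := by
  have hM : (0:ℝ) < m + C := by linarith
  set M : ℝ := m + C with hM_def
  set q : ℝ := C / M with hq_def
  have hq0 : 0 < q := div_pos hC hM
  have hq1 : q < 1 := (div_lt_one hM).2 (by linarith)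
  set s : ℝ := Real.sqrt q with hs_def
  have hs0 : 0 < s := Real.sqrt_pos.2 hq0
  have hs1 : s < 1 := by
    rw [hs_def, show (1:ℝ) = Real.sqrt 1 by simp]
    exact Real.sqrt_lt_sqrt hq0.le hq1
  have h1s : 0 < 1 - s := by linarith
  have hlogs : Real.log s < 0 := Real.log_neg hs0 hs1
  have hr₀0 : (0:ℝ) < r₀ := by linarith
  refine ⟨M⁻¹ * (1 - s)⁻¹, -Real.log s / r₀,
    mul_pos (inv_pos.2 hM) (inv_pos.2 h1s),
    div_pos (by linarith) hr₀0, ?_⟩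
  intro E _ _ _ R hsymm hlow hup hsupp e₀ e₀'
  set c : ℝ := -Real.log s / r₀ with hc_def
  set S : Matrix E E ℝ := 1 - M⁻¹ • R with hS_def
  -- symmetry of S
  have hSsymm : Sᵀ = S := by
    rw [hS_def, Matrix.transpose_sub, Matrix.transpose_smul, Matrix.transpose_one, hsymm]
  have hvec : ∀ x : E → ℝ, S.vecMul x = S.mulVec x := by
    intro x
    have := Matrix.mulVec_transpose S x
    rw [hSsymm] at this
    exact this.symm
  have hsym2 : ∀ x y : E → ℝ, x ⬝ᵥ S.mulVec y = y ⬝ᵥ S.mulVec x := by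
    intro x y
    rw [Matrix.dotProduct_mulVec, hvec, dotProduct_comm]
  -- quadratic form bounds for S
  have hdot : ∀ x : E → ℝ, x ⬝ᵥ x = ∑ e, x e ^ 2 := by
    intro x; simp [dotProduct, sq]
  have hform : ∀ x : E → ℝ,
      x ⬝ᵥ S.mulVec x = (x ⬝ᵥ x) - M⁻¹ * (x ⬝ᵥ R.mulVec x) := by
    intro x
    rw [hS_def, Matrix.sub_mulVec, Matrix.smul_mulVec, Matrix.one_mulVec,
      dotProduct_sub, dotProduct_smul, smul_eq_mul]
  have hpos : ∀ x : E → ℝ, 0 ≤ x ⬝ᵥ S.mulVec x := by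
    intro x
    rw [hform]
    have h1 : M⁻¹ * (x ⬝ᵥ R.mulVec x) ≤ M⁻¹ * (M * ∑ e, x e ^ 2) :=
      mul_le_mul_of_nonneg_left (hup x) (inv_pos.2 hM).le
    have h2 : M⁻¹ * (M * ∑ e, x e ^ 2) = ∑ e, x e ^ 2 := by
      field_simp
    rw [hdot]
    linarith [h1, h2.le]
  have hqbd : ∀ x : E → ℝ, x ⬝ᵥ S.mulVec x ≤ q * (x ⬝ᵥ x) := by
    intro x
    rw [hform, hdot]
    have h1 : M⁻¹ * (m * ∑ e, x e ^ 2) ≤ M⁻¹ * (x ⬝ᵥ R.mulVec x) :=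
      mul_le_mul_of_nonneg_left (hlow x) (inv_pos.2 hM).le
    have h2 : (∑ e, x e ^ 2) - M⁻¹ * (m * ∑ e, x e ^ 2) = q * ∑ e, x e ^ 2 := by
      rw [hq_def]
      field_simp
      ring
    linarith [h1, h2]
  -- Cauchy–Schwarz for the PSD form of S
  have hCS : ∀ x y : E → ℝ,
      (x ⬝ᵥ S.mulVec y) ^ 2 ≤ (x ⬝ᵥ S.mulVec x) * (y ⬝ᵥ S.mulVec y) := by
    intro x y
    have hd := discrim_le_zero (a := y ⬝ᵥ S.mulVec y) (b := 2 * (x ⬝ᵥ S.mulVec y))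
      (c := x ⬝ᵥ S.mulVec x) ?_
    · rw [discrim] at hd; nlinarith [hd]
    · intro t
      have h0 := hpos (x + t • y)
      have hexp : (x + t • y) ⬝ᵥ S.mulVec (x + t • y)
          = (y ⬝ᵥ S.mulVec y) * t ^ 2 + 2 * (x ⬝ᵥ S.mulVec y) * t + (x ⬝ᵥ S.mulVec x) := by
        rw [Matrix.mulVec_add, Matrix.mulVec_smul, add_dotProduct,
          smul_dotProduct, dotProduct_add, dotProduct_add,
          dotProduct_smul, dotProduct_smul, hsym2 y x]
        simp only [smul_eq_mul]
        ring
      rw [hexp] at h0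
      linarith [h0]
  -- one-step contraction on Euclidean norms
  have hstep : ∀ x : E → ℝ, (S.mulVec x) ⬝ᵥ (S.mulVec x) ≤ q ^ 2 * (x ⬝ᵥ x) := by
    intro x
    set y : E → ℝ := S.mulVec x with hy
    have hyy : x ⬝ᵥ S.mulVec y = y ⬝ᵥ y := by
      rw [Matrix.dotProduct_mulVec, hvec, ← hy]
    have h1 : (y ⬝ᵥ y) ^ 2 ≤ (x ⬝ᵥ S.mulVec x) * (y ⬝ᵥ S.mulVec y) := by
      rw [← hyy]; exact hCS x y
    have h2 : x ⬝ᵥ S.mulVec x ≤ q * (x ⬝ᵥ x) := hqbd x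
    have h3 : y ⬝ᵥ S.mulVec y ≤ q * (y ⬝ᵥ y) := hqbd y
    have hxx : 0 ≤ x ⬝ᵥ x := by rw [hdot]; positivity
    have hyy0 : 0 ≤ y ⬝ᵥ y := by rw [hdot]; positivity
    rcases eq_or_lt_of_le hyy0 with h | h
    · rw [← h]; positivity
    · nlinarith [hpos x, hpos y]
  -- iterated contraction
  have hk : ∀ (k : ℕ) (x : E → ℝ),
      ((S ^ k).mulVec x) ⬝ᵥ ((S ^ k).mulVec x) ≤ q ^ (2 * k) * (x ⬝ᵥ x) := by
    intro k
    induction k with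
    | zero => intro x; simp [Matrix.one_mulVec]
    | succ k ih =>
      intro x
      have hpow : (S ^ (k + 1)).mulVec x = S.mulVec ((S ^ k).mulVec x) := by
        rw [Matrix.mulVec_mulVec, ← pow_succ']
      rw [hpow]
      calc (S.mulVec ((S ^ k).mulVec x)) ⬝ᵥ (S.mulVec ((S ^ k).mulVec x))
          ≤ q ^ 2 * (((S ^ k).mulVec x) ⬝ᵥ ((S ^ k).mulVec x)) := hstep _
        _ ≤ q ^ 2 * (q ^ (2 * k) * (x ⬝ᵥ x)) := by
            exact mul_le_mul_of_nonneg_left (ih x) (by positivity)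
        _ = q ^ (2 * (k + 1)) * (x ⬝ᵥ x) := by ring
  -- entrywise bound
  have hentry : ∀ (k : ℕ) (e e' : E), |(S ^ k) e e'| ≤ q ^ k := by
    intro k e e'
    have hv : (S ^ k).mulVec (Pi.single e' 1) = fun f => (S ^ k) f e' := by
      rw [Matrix.mulVec_single]
      funext f; simp
    have hsingle : (Pi.single e' (1:ℝ)) ⬝ᵥ (Pi.single e' 1) = 1 := by
      simp [dotProduct, Pi.single_apply]
    have hb := hk k (Pi.single e' 1)
    rw [hv, hsingle, mul_one] at hb
    have hterm : ((S ^ k) e e') ^ 2 ≤ q ^ (2 * k) := by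
      refine le_trans ?_ hb
      have : (fun f => (S ^ k) f e') ⬝ᵥ (fun f => (S ^ k) f e') = ∑ f, ((S ^ k) f e') ^ 2 := by
        simp [dotProduct, sq]
      rw [this]
      exact Finset.single_le_sum (f := fun f => ((S ^ k) f e') ^ 2)
        (fun f _ => by positivity) (Finset.mem_univ e)
    have h2 : ((S ^ k) e e') ^ 2 ≤ (q ^ k) ^ 2 := by
      rw [← pow_mul, mul_comm k 2]; exact hterm
    calc |(S ^ k) e e'| = Real.sqrt (((S ^ k) e e') ^ 2) := (Real.sqrt_sq_eq_abs _).symm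
      _ ≤ Real.sqrt ((q ^ k) ^ 2) := Real.sqrt_le_sqrt h2
      _ = q ^ k := Real.sqrt_sq (by positivity)
  -- support of powers
  have hSsupp : ∀ e e' : E, r₀ < dist e e' → S e e' = 0 := by
    intro e e' h
    have hne : e ≠ e' := by
      intro heq; rw [heq, dist_self] at h; linarith
    rw [hS_def]
    simp [Matrix.sub_apply, Matrix.one_apply_ne hne, hsupp e e' h]
  have hpowsupp : ∀ (k : ℕ) (e e' : E), (k : ℝ) * r₀ < dist e e' → (S ^ k) e e' = 0 := by
    intro k
    induction k with
    | zero =>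
      intro e e' h
      simp only [Nat.cast_zero, zero_mul] at h
      have hne : e ≠ e' := by
        intro heq; rw [heq, dist_self] at h; exact lt_irrefl _ h
      simp [Matrix.one_apply_ne hne]
    | succ k ih =>
      intro e e' h
      rw [pow_succ', Matrix.mul_apply]
      refine Finset.sum_eq_zero fun f _ => ?_
      by_cases hf : r₀ < dist e f
      · rw [hSsupp e f hf, zero_mul]
      · push_neg at hf
        have htri := dist_triangle e f e'
        have hcast : ((k + 1 : ℕ) : ℝ) = (k : ℝ) + 1 := by push_cast; ring
        rw [hcast] at h
        have : (k : ℝ) * r₀ < dist f e' := by nlinarith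
        rw [ih f e' this, mul_zero]
  -- summability
  have hgeo : Summable fun n : ℕ => q ^ n := summable_geometric_of_lt_one hq0.le hq1
  have habs : ∀ e e' : E, Summable fun n : ℕ => |(S ^ n) e e'| := by
    intro e e'
    exact Summable.of_nonneg_of_le (fun n => abs_nonneg _) (fun n => hentry n e e') hgeo
  have hsum : ∀ e e' : E, Summable fun n : ℕ => (S ^ n) e e' := fun e e' =>
    (habs e e').of_abs
  -- the Neumann series
  set N : Matrix E E ℝ := Matrix.of (fun e e' => ∑' n : ℕ, (S ^ n) e e') with hN_def
  have hNentry : ∀ e e', N e e' = ∑' n : ℕ, (S ^ n) e e' := fun _ _ => rfl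
  have hNeumann : (1 - S) * N = 1 := by
    ext e e'
    rw [Matrix.mul_apply]
    have step1 : ∀ f, (1 - S) e f * N f e' = ∑' n : ℕ, (1 - S) e f * (S ^ n) f e' := by
      intro f; rw [hNentry, tsum_mul_left]
    calc ∑ f, (1 - S) e f * N f e'
        = ∑ f, ∑' n : ℕ, (1 - S) e f * (S ^ n) f e' := Finset.sum_congr rfl fun f _ => step1 f
      _ = ∑' n : ℕ, ∑ f, (1 - S) e f * (S ^ n) f e' := by
          exact (Summable.tsum_finsetSum fun f _ => (hsum f e').mul_left _).symm
      _ = ∑' n : ℕ, ((S ^ n) e e' - (S ^ (n + 1)) e e') := by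
          congr 1; funext n
          have : ∑ f, (1 - S) e f * (S ^ n) f e' = ((1 - S) * S ^ n) e e' :=
            (Matrix.mul_apply).symm
          rw [this, sub_mul, one_mul, ← pow_succ', Matrix.sub_apply]
      _ = (1 : Matrix E E ℝ) e e' := by
          have hshift : Summable fun n : ℕ => (S ^ (n + 1)) e e' :=
            (summable_nat_add_iff 1).2 (hsum e e')
          rw [Summable.tsum_sub (hsum e e') hshift, Summable.tsum_eq_zero_add (hsum e e')]
          simp [pow_zero]
  have hRinv : R⁻¹ = M⁻¹ • N := by
    apply Matrix.inv_eq_right_inv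
    have hR : R = M • (1 - S) := by
      rw [hS_def]
      rw [sub_sub_cancel, smul_smul, mul_inv_cancel₀ hM.ne', one_smul]
    rw [hR, Matrix.smul_mul, Matrix.mul_smul, smul_smul, mul_inv_cancel₀ hM.ne', one_smul,
      hNeumann]
  -- final estimate
  rw [hRinv]
  have hDnn : 0 ≤ dist e₀ e₀' := dist_nonneg
  set D : ℝ := dist e₀ e₀' with hD_def
  have hterm : ∀ n : ℕ, |(S ^ n) e₀ e₀'| ≤ Real.exp (-c * D) * s ^ n := by
    intro n
    by_cases hn : (n : ℝ) * r₀ < D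
    · rw [hpowsupp n e₀ e₀' hn, abs_zero]; positivity
    · push_neg at hn
      have hDn : D / r₀ ≤ (n : ℝ) := (div_le_iff₀ hr₀0).2 hn
      have hsn : (s : ℝ) ^ n ≤ Real.exp (-c * D) := by
        have h1 : (s : ℝ) ^ n = Real.exp ((n : ℝ) * Real.log s) := by
          rw [Real.exp_nat_mul, Real.exp_log hs0]
        rw [h1]
        apply Real.exp_le_exp.2
        have h2 : -c * D = Real.log s * (D / r₀) := by
          rw [hc_def]; field_simp
        rw [h2]
        have := mul_le_mul_of_nonpos_left hDn hlogs.le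
        linarith [this]
      have hq_eq : q = s ^ 2 := (Real.sq_sqrt hq0.le).symm
      calc |(S ^ n) e₀ e₀'| ≤ q ^ n := hentry n e₀ e₀'
        _ = s ^ n * s ^ n := by rw [hq_eq, ← pow_mul, two_mul, pow_add]
        _ ≤ Real.exp (-c * D) * s ^ n :=
            mul_le_mul_of_nonneg_right hsn (by positivity)
  have hmaj : Summable fun n : ℕ => Real.exp (-c * D) * s ^ n :=
    (summable_geometric_of_lt_one hs0.le hs1).mul_left _
  have hNbd : |N e₀ e₀'| ≤ Real.exp (-c * D) * (1 - s)⁻¹ := by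
    rw [hNentry]
    calc |∑' n : ℕ, (S ^ n) e₀ e₀'| ≤ ∑' n : ℕ, |(S ^ n) e₀ e₀'| := by
          have := norm_tsum_le_tsum_norm (f := fun n : ℕ => (S ^ n) e₀ e₀') ?_
          · simpa [Real.norm_eq_abs] using this
          · simpa [Real.norm_eq_abs] using habs e₀ e₀'
      _ ≤ ∑' n : ℕ, Real.exp (-c * D) * s ^ n := Summable.tsum_le_tsum hterm (habs e₀ e₀') hmaj
      _ = Real.exp (-c * D) * (1 - s)⁻¹ := by
          rw [tsum_mul_left, tsum_geometric_of_lt_one hs0.le hs1]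
  rw [Matrix.smul_apply, smul_eq_mul, abs_mul, abs_of_pos (inv_pos.2 hM)]
  calc M⁻¹ * |N e₀ e₀'| ≤ M⁻¹ * (Real.exp (-c * D) * (1 - s)⁻¹) :=
        mul_le_mul_of_nonneg_left hNbd (inv_pos.2 hM).le
    _ = M⁻¹ * (1 - s)⁻¹ * Real.exp (-c * D) := by ring
end

section
/- For N×N complex matrices X and Y, the derivative of t ↦ exp(X + tY) at t = 0 equals e^X (Y − [X,Y]/2! + [X,[X,Y]]/3! − ⋯) = e^X ∑_{k=0}^∞ (−1)^k ad_X^k(Y)/(k+1)!, where ad_X(Y) = XY − YX. -/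
open Finset

section Aux

theorem pascalSum {R : Type*} [Ring R] {a b : R} (h : Commute a b) (n : ℕ) :
    ∑ k ∈ range (n+1), ((n+1).choose (k+1)) • (a^(n-k) * b^k)
      = ∑ j ∈ range (n+1), a^j * (a+b)^(n-j) := by
  induction n with
  | zero => simp
  | succ n ih =>
    have hsplit : ∀ k ∈ range (n+2), ((n+2).choose (k+1)) • (a^(n+1-k) * b^k)
        = ((n+1).choose k) • (a^(n+1-k) * b^k) + ((n+1).choose (k+1)) • (a^(n+1-k) * b^k) :=
      fun k _ => by rw [Nat.choose_succ_succ, add_smul]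
    rw [Finset.sum_congr rfl hsplit, Finset.sum_add_distrib]
    have hA : ∑ k ∈ range (n+2), ((n+1).choose k) • (a^(n+1-k) * b^k) = (a+b)^(n+1) := by
      rw [h.add_pow, ← Finset.sum_range_reflect]
      refine Finset.sum_congr rfl fun k hk => ?_
      rw [Finset.mem_range] at hk
      have h1 : n + 1 + 1 - 1 - k = n + 1 - k := by omega
      have h2 : n + 1 - (n + 1 - k) = k := by omega
      have h3 : (n+1).choose (n+1-k) = (n+1).choose k := Nat.choose_symm (by omega)
      rw [h1, h2, h3, nsmul_eq_mul, ← (Nat.cast_commute ((n+1).choose k) _).eq]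
    have hB : ∑ k ∈ range (n+2), ((n+1).choose (k+1)) • (a^(n+1-k) * b^k)
        = a * ∑ j ∈ range (n+1), a^j * (a+b)^(n-j) := by
      rw [Finset.sum_range_succ, Nat.choose_eq_zero_of_lt (by omega), zero_smul, add_zero, ← ih,
        Finset.mul_sum]
      refine Finset.sum_congr rfl fun k hk => ?_
      rw [Finset.mem_range] at hk
      have h1 : n + 1 - k = (n - k) + 1 := by omega
      rw [h1, pow_succ', mul_assoc, mul_smul_comm]
    rw [hA, hB, Finset.sum_range_succ' (fun j => a^j * (a+b)^(n+1-j)), Finset.mul_sum]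
    have : ∀ i ∈ range (n+1), a ^ (i+1) * (a+b)^(n+1-(i+1)) = a * (a^i * (a+b)^(n-i)) :=
      fun i _ => by rw [pow_succ', mul_assoc, Nat.succ_sub_succ]
    rw [Finset.sum_congr rfl this, ← Finset.mul_sum, pow_zero, one_mul, add_comm, Nat.sub_zero]

theorem keyId {R : Type*} [Ring R] [Algebra ℂ R] {a b : R} (h : Commute a b) (n : ℕ) :
    ∑ p ∈ Finset.HasAntidiagonal.antidiagonal n,
        (((p.1.factorial : ℂ))⁻¹ * ((-1)^p.2 / ((p.2+1).factorial : ℂ))) • (a^p.1 * (a - b)^p.2)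
      = (((n+1).factorial : ℂ))⁻¹ • ∑ j ∈ range (n+1), a^j * b^(n-j) := by
  rw [Finset.Nat.sum_antidiagonal_eq_sum_range_succ
    (fun m k => (((m.factorial : ℂ))⁻¹ * ((-1)^k / ((k+1).factorial : ℂ))) • (a^m * (a - b)^k)),
    ← Finset.sum_range_reflect]
  simp only [Nat.succ_sub_one]
  have step : ∀ k ∈ range (n+1),
      ((((n-k).factorial : ℂ))⁻¹ * ((-1)^(n-(n-k)) / ((n-(n-k)+1).factorial : ℂ)))
          • (a^(n-k) * (a - b)^(n-(n-k)))
      = (((n+1).factorial : ℂ))⁻¹ • (((n+1).choose (k+1)) • (a^(n-k) * (b-a)^k)) := by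
    intro k hk
    rw [Finset.mem_range] at hk
    have h2 : n - (n - k) = k := by omega
    rw [h2]
    have hfact : ((n+1).choose (k+1) : ℂ) * ((k+1).factorial) * ((n-k).factorial)
        = ((n+1).factorial : ℂ) := by
      have := Nat.choose_mul_factorial_mul_factorial (show k+1 ≤ n+1 by omega)
      rw [show n+1-(k+1) = n-k by omega] at this
      exact_mod_cast this
    have hb : (a - b)^k = ((-1:ℂ)^k) • (b-a)^k := by
      have : (b - a) = (-1:ℂ) • (a - b) := by rw [neg_smul, one_smul, neg_sub]
      rw [this, smul_pow, smul_smul, ← mul_pow]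
      norm_num
    rw [hb, mul_smul_comm, smul_smul, ← Nat.cast_smul_eq_nsmul ℂ, smul_smul]
    congr 1
    have hne1 : ((k+1).factorial : ℂ) ≠ 0 := Nat.cast_ne_zero.mpr (Nat.factorial_ne_zero _)
    have hne2 : (((n-k)).factorial : ℂ) ≠ 0 := Nat.cast_ne_zero.mpr (Nat.factorial_ne_zero _)
    have hne3 : (((n+1)).factorial : ℂ) ≠ 0 := Nat.cast_ne_zero.mpr (Nat.factorial_ne_zero _)
    have hx : ((-1:ℂ))^(k*2) = 1 := by rw [pow_mul', neg_one_sq, one_pow]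
    field_simp
    ring_nf
    rw [hx, mul_one, Nat.add_comm 1 n, Nat.add_comm 1 k]
    linear_combination -hfact
  rw [Finset.sum_congr rfl step, ← Finset.smul_sum, pascalSum (h.sub_right (Commute.refl a)),
    add_sub_cancel]

theorem hasDerivAt_pow_comp' {𝔸 : Type*} [NormedRing 𝔸] [NormedAlgebra ℝ 𝔸]
    {f : ℝ → 𝔸} {f' : 𝔸} {t : ℝ} (hf : HasDerivAt f f' t) (n : ℕ) :
    HasDerivAt (fun s => f s ^ n) (∑ j ∈ range n, f t ^ j * f' * f t ^ (n-1-j)) t := by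
  induction n with
  | zero => simpa using hasDerivAt_const t (1 : 𝔸)
  | succ n ih =>
    have h := ih.mul hf
    have e : (∑ j ∈ range n, f t ^ j * f' * f t ^ (n-1-j)) * f t + f t ^ n * f'
        = ∑ j ∈ range (n+1), f t ^ j * f' * f t ^ (n+1-1-j) := by
      rw [Finset.sum_range_succ, Finset.sum_mul]
      congr 1
      · refine Finset.sum_congr rfl fun j hj => ?_
        rw [Finset.mem_range] at hj
        rw [mul_assoc, ← pow_succ, show n - 1 - j + 1 = n + 1 - 1 - j by omega]
      · rw [show n + 1 - 1 - n = 0 by omega, pow_zero, mul_one]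
    rw [← e, show (fun s => f s ^ (n+1)) = fun s => f s ^ n * f s from funext fun s => pow_succ _ _]
    exact h

theorem norm_pow_mul_le' {A : Type*} [NormedRing A] (Z W : A) :
    ∀ j, ‖Z^j * W‖ ≤ ‖Z‖^j * ‖W‖
  | 0 => by simp
  | (j+1) => by
      calc ‖Z^(j+1) * W‖ = ‖Z * (Z^j * W)‖ := by rw [pow_succ', mul_assoc]
      _ ≤ ‖Z‖ * ‖Z^j * W‖ := norm_mul_le _ _
      _ ≤ ‖Z‖ * (‖Z‖^j * ‖W‖) :=
        mul_le_mul_of_nonneg_left (norm_pow_mul_le' Z W j) (norm_nonneg Z)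
      _ = ‖Z‖^(j+1) * ‖W‖ := by ring

theorem norm_mul_pow_le' {A : Type*} [NormedRing A] (Z W : A) :
    ∀ j, ‖W * Z^j‖ ≤ ‖W‖ * ‖Z‖^j
  | 0 => by simp
  | (j+1) => by
      calc ‖W * Z^(j+1)‖ = ‖(W * Z^j) * Z‖ := by rw [pow_succ, mul_assoc]
      _ ≤ ‖W * Z^j‖ * ‖Z‖ := norm_mul_le _ _
      _ ≤ (‖W‖ * ‖Z‖^j) * ‖Z‖ :=
        mul_le_mul_of_nonneg_right (norm_mul_pow_le' Z W j) (norm_nonneg Z)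
      _ = ‖W‖ * ‖Z‖^(j+1) := by ring

end Aux

attribute [local instance] Matrix.frobeniusNormedAddCommGroup Matrix.frobeniusNormedSpace
  Matrix.frobeniusNormedRing Matrix.frobeniusNormedAlgebra

/-- The adjoint operator `ad_X : Y ↦ XY - YX`. -/
noncomputable def adL {N : ℕ} (X : Matrix (Fin N) (Fin N) ℂ) :
    Module.End ℂ (Matrix (Fin N) (Fin N) ℂ) :=
  LinearMap.mulLeft ℂ X - LinearMap.mulRight ℂ X

theorem norm_adL_pow_le {N : ℕ} (X Y : Matrix (Fin N) (Fin N) ℂ) :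
    ∀ k, ‖(adL X ^ k) Y‖ ≤ (2*‖X‖)^k * ‖Y‖
  | 0 => by simp
  | (k+1) => by
      have h1 : (adL X ^ (k+1)) Y = (adL X ^ k) (X * Y - Y * X) := by
        rw [pow_succ, Module.End.mul_apply]
        congr 1
      rw [h1]
      calc ‖(adL X ^ k) (X * Y - Y * X)‖ ≤ (2*‖X‖)^k * ‖X * Y - Y * X‖ :=
            norm_adL_pow_le X (X * Y - Y * X) k
      _ ≤ (2*‖X‖)^k * (2 * ‖X‖ * ‖Y‖) := by
          refine mul_le_mul_of_nonneg_left ?_ (by positivity)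
          calc ‖X * Y - Y * X‖ ≤ ‖X * Y‖ + ‖Y * X‖ := norm_sub_le _ _
          _ ≤ ‖X‖ * ‖Y‖ + ‖Y‖ * ‖X‖ := add_le_add (norm_mul_le _ _) (norm_mul_le _ _)
          _ = 2 * ‖X‖ * ‖Y‖ := by ring
      _ = (2*‖X‖)^(k+1) * ‖Y‖ := by ring

theorem keyId_applied {N : ℕ} (X Y : Matrix (Fin N) (Fin N) ℂ) (n : ℕ) :
    ∑ p ∈ Finset.HasAntidiagonal.antidiagonal n,
        (((p.1.factorial : ℂ))⁻¹ * ((-1)^p.2 / ((p.2+1).factorial : ℂ)))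
          • (X^p.1 * ((adL X ^ p.2) Y))
      = (((n+1).factorial : ℂ))⁻¹ • ∑ j ∈ range (n+1), X^j * Y * X^(n-j) := by
  have h := keyId (a := LinearMap.mulLeft ℂ X) (b := LinearMap.mulRight ℂ X)
    (LinearMap.commute_mulLeft_right X X) n
  have h2 := DFunLike.congr_fun h Y
  simp only [LinearMap.sum_apply, LinearMap.smul_apply, Module.End.mul_apply,
    LinearMap.pow_mulLeft, LinearMap.pow_mulRight, LinearMap.mulLeft_apply,
    LinearMap.mulRight_apply] at h2
  have hadL : LinearMap.mulLeft ℂ X - LinearMap.mulRight ℂ X = adL X := rfl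
  rw [hadL] at h2
  rw [h2]
  congr 1
  refine Finset.sum_congr rfl fun j _ => ?_
  rw [mul_assoc]

/-- The derivative of `t ↦ exp(X + tY)` at `t = 0` equals
`e^X ∑_{k=0}^∞ (-1)^k ad_X^k(Y) / (k+1)!`. -/
theorem stmt14 {N : ℕ} (X Y : Matrix (Fin N) (Fin N) ℂ) :
    HasDerivAt (fun t : ℝ => NormedSpace.exp (X + t • Y))
      (NormedSpace.exp X *
        ∑' k : ℕ, ((-1 : ℝ) ^ k / ((k + 1).factorial : ℝ)) • ((adL X ^ k) Y)) 0 := by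
  classical
  set R₀ : ℝ := ‖X‖ + ‖Y‖ with hR₀def
  set g : ℕ → ℝ → Matrix (Fin N) (Fin N) ℂ :=
    fun n t => ((n.factorial : ℂ))⁻¹ • (X + t • Y)^n with hgdef
  set g' : ℕ → ℝ → Matrix (Fin N) (Fin N) ℂ :=
    fun n t => ((n.factorial : ℂ))⁻¹ •
      ∑ j ∈ range n, (X + t • Y)^j * Y * (X + t • Y)^(n-1-j) with hg'def
  set u : ℕ → ℝ := fun n => (n.factorial : ℝ)⁻¹ * (n * (‖Y‖ * R₀^(n-1))) with hudef
  have hderiv : ∀ (n : ℕ) (t : ℝ), HasDerivAt (g n) (g' n t) t := by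
    intro n t
    have h1 : HasDerivAt (fun s : ℝ => X + s • Y) Y t := by
      exact (((hasDerivAt_id t).smul_const Y).const_add X).congr_deriv (one_smul ℝ Y)
    exact (hasDerivAt_pow_comp' h1 n).const_smul ((n.factorial : ℂ))⁻¹
  have hbound : ∀ (n : ℕ) (t : ℝ), t ∈ Set.Ioo (-1:ℝ) 1 → ‖g' n t‖ ≤ u n := by
    intro n t ht
    obtain ⟨ht1, ht2⟩ := ht
    have hZ : ‖X + t • Y‖ ≤ R₀ := by
      have h1 : ‖t • Y‖ = |t| * ‖Y‖ := by rw [norm_smul, Real.norm_eq_abs]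
      have h2 : |t| ≤ 1 := abs_le.mpr ⟨le_of_lt ht1, le_of_lt ht2⟩
      calc ‖X + t • Y‖ ≤ ‖X‖ + ‖t • Y‖ := norm_add_le _ _
      _ ≤ ‖X‖ + ‖Y‖ := by rw [h1]; nlinarith [norm_nonneg Y]
    set Z := X + t • Y with hZdef
    have hterm : ∀ j ∈ range n, ‖Z^j * Y * Z^(n-1-j)‖ ≤ ‖Y‖ * R₀^(n-1) := by
      intro j hj
      rw [Finset.mem_range] at hj
      calc ‖Z^j * Y * Z^(n-1-j)‖ = ‖Z^j * (Y * Z^(n-1-j))‖ := by rw [mul_assoc]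
      _ ≤ ‖Z‖^j * ‖Y * Z^(n-1-j)‖ := norm_pow_mul_le' _ _ _
      _ ≤ ‖Z‖^j * (‖Y‖ * ‖Z‖^(n-1-j)) :=
          mul_le_mul_of_nonneg_left (norm_mul_pow_le' _ _ _) (by positivity)
      _ ≤ R₀^j * (‖Y‖ * R₀^(n-1-j)) := by gcongr
      _ = ‖Y‖ * (R₀^j * R₀^(n-1-j)) := by ring
      _ = ‖Y‖ * R₀^(n-1) := by rw [← pow_add, show j + (n-1-j) = n-1 by omega]
    rw [hg'def, hudef]
    simp only
    rw [norm_smul, norm_inv, Complex.norm_natCast]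
    refine mul_le_mul_of_nonneg_left ?_ (by positivity)
    calc ‖∑ j ∈ range n, Z^j * Y * Z^(n-1-j)‖ ≤ ∑ j ∈ range n, ‖Z^j * Y * Z^(n-1-j)‖ :=
        norm_sum_le _ _
    _ ≤ ∑ _j ∈ range n, ‖Y‖ * R₀^(n-1) := Finset.sum_le_sum hterm
    _ = n * (‖Y‖ * R₀^(n-1)) := by rw [Finset.sum_const, card_range, nsmul_eq_mul]
  have hu : Summable u := by
    refine (summable_nat_add_iff 1).mp ?_
    have h1 : (fun n : ℕ => u (n+1)) = fun n : ℕ => ‖Y‖ * (R₀^n / (n.factorial : ℝ)) := by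
      funext n
      rw [hudef]
      simp only
      rw [Nat.factorial_succ, Nat.add_sub_cancel]
      have hn : ((n.factorial : ℝ)) ≠ 0 := Nat.cast_ne_zero.mpr (Nat.factorial_ne_zero n)
      push_cast
      field_simp
    rw [h1]
    exact (Real.summable_pow_div_factorial R₀).mul_left ‖Y‖
  have hsum0 : Summable fun n => g n 0 := by
    refine (NormedSpace.expSeries_summable' (𝕂 := ℂ) X).congr fun n => ?_
    rw [hgdef]
    simp
  have h0mem : (0:ℝ) ∈ Set.Ioo (-1:ℝ) 1 := by norm_num
  have hmain : HasDerivAt (fun t : ℝ => ∑' n, g n t) (∑' n, g' n 0) 0 :=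
    hasDerivAt_tsum_of_isPreconnected hu isOpen_Ioo (convex_Ioo _ _).isPreconnected
      (fun n y _ => hderiv n y) hbound h0mem hsum0 h0mem
  have hfun : (fun t : ℝ => NormedSpace.exp (X + t • Y)) = fun t => ∑' n, g n t := by
    funext t
    rw [NormedSpace.exp_eq_tsum (𝕂 := ℂ)]
  -- now compute the value of the derivative
  have hg'0 : ∀ n, g' n 0 = ((n.factorial : ℂ))⁻¹ • ∑ j ∈ range n, X^j * Y * X^(n-1-j) := by
    intro n
    rw [hg'def]
    simp
  have hcoef : ∀ k : ℕ, ((-1 : ℝ) ^ k / ((k + 1).factorial : ℝ)) • ((adL X ^ k) Y)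
      = (((-1 : ℂ) ^ k / (((k+1)).factorial : ℂ))) • ((adL X ^ k) Y) := by
    intro k
    rw [← Complex.coe_smul]
    congr 1
    push_cast
    ring
  have hfnorm : Summable fun m : ℕ => ‖((m.factorial : ℂ))⁻¹ • X^m‖ :=
    NormedSpace.norm_expSeries_summable' (𝕂 := ℂ) X
  have hgnorm : Summable fun k : ℕ => ‖(((-1:ℂ)^k / ((k+1).factorial : ℂ))) • ((adL X ^ k) Y)‖ := by
    have hmaj : Summable fun k : ℕ => (2*‖X‖)^k / (k.factorial : ℝ) * ‖Y‖ :=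
      (Real.summable_pow_div_factorial (2*‖X‖)).mul_right ‖Y‖
    refine Summable.of_nonneg_of_le (fun k => norm_nonneg _) (fun k => ?_) hmaj
    rw [norm_smul]
    have h1 : ‖((-1:ℂ)^k / ((k+1).factorial : ℂ))‖ = (((k+1).factorial : ℝ))⁻¹ := by
      rw [norm_div, norm_pow, norm_neg, norm_one, one_pow, Complex.norm_natCast, one_div]
    rw [h1]
    have h2 : (((k+1).factorial : ℝ))⁻¹ ≤ ((k.factorial : ℝ))⁻¹ := by
      have : (k.factorial : ℝ) ≤ ((k+1).factorial : ℝ) := by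
        exact_mod_cast Nat.factorial_le (Nat.le_succ k)
      exact inv_anti₀ (by positivity) this
    calc (((k+1).factorial : ℝ))⁻¹ * ‖(adL X ^ k) Y‖
        ≤ ((k.factorial : ℝ))⁻¹ * ((2*‖X‖)^k * ‖Y‖) := by
          refine mul_le_mul h2 (norm_adL_pow_le X Y k) (norm_nonneg _) (by positivity)
    _ = (2*‖X‖)^k / (k.factorial : ℝ) * ‖Y‖ := by ring
  have hexp : NormedSpace.exp X = ∑' m : ℕ, ((m.factorial : ℂ))⁻¹ • X^m := by
    rw [NormedSpace.exp_eq_tsum (𝕂 := ℂ)]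
  have hsumg' : Summable fun n => g' n 0 :=
    Summable.of_norm_bounded hu (fun n => hbound n 0 h0mem)
  have h00 : g' 0 0 = 0 := by rw [hg'def]; simp
  have hsucc : ∀ n : ℕ, g' (n+1) 0
      = (((n+1).factorial : ℂ))⁻¹ • ∑ j ∈ range (n+1), X^j * Y * X^(n-j) := by
    intro n
    rw [hg'0]
    congr 1
  have hprod : ∀ n : ℕ, ∑ p ∈ Finset.HasAntidiagonal.antidiagonal n,
      (((p.1.factorial : ℂ))⁻¹ • X^p.1) *
        ((((-1:ℂ)^p.2 / ((p.2+1).factorial : ℂ))) • ((adL X ^ p.2) Y))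
      = (((n+1).factorial : ℂ))⁻¹ • ∑ j ∈ range (n+1), X^j * Y * X^(n-j) := by
    intro n
    rw [← keyId_applied X Y n]
    refine Finset.sum_congr rfl fun p _ => ?_
    rw [smul_mul_assoc, mul_smul_comm, smul_smul]
  have hval : (∑' n, g' n 0) = NormedSpace.exp X *
      ∑' k : ℕ, ((-1 : ℝ) ^ k / ((k + 1).factorial : ℝ)) • ((adL X ^ k) Y) := by
    calc (∑' n, g' n 0) = g' 0 0 + ∑' n, g' (n+1) 0 := hsumg'.tsum_eq_zero_add
    _ = ∑' n, g' (n+1) 0 := by rw [h00, zero_add]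
    _ = ∑' n, ∑ p ∈ Finset.HasAntidiagonal.antidiagonal n, (((p.1.factorial : ℂ))⁻¹ • X^p.1) *
          ((((-1:ℂ)^p.2 / ((p.2+1).factorial : ℂ))) • ((adL X ^ p.2) Y)) :=
        tsum_congr fun n => by rw [hsucc n, ← hprod n]
    _ = (∑' m : ℕ, ((m.factorial : ℂ))⁻¹ • X^m) *
          ∑' k : ℕ, (((-1:ℂ)^k / ((k+1).factorial : ℂ))) • ((adL X ^ k) Y) :=
        (tsum_mul_tsum_eq_tsum_sum_antidiagonal_of_summable_norm hfnorm hgnorm).symm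
    _ = NormedSpace.exp X *
          ∑' k : ℕ, ((-1 : ℝ) ^ k / ((k + 1).factorial : ℝ)) • ((adL X ^ k) Y) := by
        rw [← hexp, ← tsum_congr hcoef]
  rw [hfun, ← hval]
  exact hmain
end
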